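/- Diamond property: if a configuration σ admits transitions σ →_i σ' and σ →_j σ'' on two distinct columns i ≠ j, then there exists a configuration σ''' such that σ' →_j σ''' and σ'' →_i σ'''. -/

import Mathlib

open scoped Classical

/-- A configuration of KSPM: a sequence of height differences. -/
abbrev Config := ℕ → ℕ

/-- The result of firing column `i` in configuration `σ` (KSPM(D) rule). -/
def fireAt (D : ℕ) (σ : Config) (i : ℕ) : Config := fun j =>
  if j = i then σ i - D
  else if j + 1 = i then σ j + (D - 1)
  else if j = i + D - 1 then σ j + 1
  else σ j

/-- `σ →_i σ'` : column `i` can be fired in `σ`, producing `σ'`. -/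
def Step (D : ℕ) (σ : Config) (i : ℕ) (σ' : Config) : Prop :=
  D ≤ σ i ∧ σ' = fireAt D σ i

/-- `σ → σ'`. -/
def StepRel (D : ℕ) (σ σ' : Config) : Prop := ∃ i, Step D σ i σ'

/-- `σ →* σ'`. -/
def Reaches (D : ℕ) : Config → Config → Prop := Relation.ReflTransGen (StepRel D)

/-- A configuration is stable (a fixed point) when no transition applies. -/
def Stable (D : ℕ) (σ : Config) : Prop := ∀ i, σ i < D

/-- `Exec D σ s σ'` : the strategy `s` leads from `σ` to `σ'`. -/
def Exec (D : ℕ) : Config → List ℕ → Config → Prop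
  | σ, [], σ' => σ' = σ
  | σ, i :: s, σ' => D ≤ σ i ∧ Exec D (fireAt D σ i) s σ'

/-- The initial configuration with `N` stacked grains on column 0. -/
def grains (N : ℕ) : Config := fun i => if i = 0 then N else 0

/-- `σ^{↓0}` : one grain added on column 0. -/
def addGrain (σ : Config) : Config := fun i => if i = 0 then σ i + 1 else σ i

/-- `π(σ)` : the (unique) stable configuration reachable from `σ`. -/
noncomputable def piCfg (D : ℕ) (σ : Config) : Config :=
  Classical.epsilon fun μ => Reaches D σ μ ∧ Stable D μ

/-- `π(N)` : the stable configuration reached from `N` stacked grains. -/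
noncomputable def piN (D N : ℕ) : Config := piCfg D (grains N)

/-- The `k`-th avalanche: the lexicographically least strategy from
`π(k−1)^{↓0}` to `π(k)`. -/
noncomputable def avalanche (D k : ℕ) : List ℕ :=
  Classical.epsilon fun s =>
    Exec D (addGrain (piN D (k - 1))) s (piN D k) ∧
    ∀ s', Exec D (addGrain (piN D (k - 1))) s' (piN D k) →
      s = s' ∨ List.Lex (· < ·) s s'

/-- `p` is a peak of the strategy `s` : it is fired at some time, and is
larger than every previously fired column. -/
def IsPeak (s : List ℕ) (p : ℕ) : Prop :=
  ∃ t : Fin s.length, s.get t = p ∧ ∀ t' : Fin s.length, t' < t → s.get t' < p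

/-- An avalanche is dense from `l` : with `m` its greatest fired column, every
column of `[l, m]` is fired. -/
def DenseFrom (s : List ℕ) (l : ℕ) : Prop :=
  ∃ m, (∀ i, l ≤ i → i ≤ m → i ∈ s) ∧ ∀ i, m < i → i ∉ s

/-- `L'(D,k)` : the least column from which the `k`-th avalanche is dense. -/
noncomputable def Lp (D k : ℕ) : ℕ := sInf {l | DenseFrom (avalanche D k) l}

/-- The global density column `L(D,N)`. -/
noncomputable def Lgdc (D N : ℕ) : ℕ := (Finset.Icc 1 N).sup (Lp D)

/-- Indices `k ∈ [1,N]` of the long avalanches up to `N` (those firing column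
`L(D,N)+D−1`), in increasing order: this enumerates `Φ(D,N)`. -/
noncomputable def longList (D N : ℕ) : List ℕ :=
  (List.range (N + 1)).filter fun k =>
    decide (1 ≤ k ∧ Lgdc D N + D - 1 ∈ avalanche D k)

theorem le_fireAt_of_ne {D : ℕ} {σ : Config} {i k : ℕ} (hk : k ≠ i) :
    σ k ≤ fireAt D σ i k := by
  unfold fireAt
  split_ifs <;> omega

/-- The enabling conditions make the truncated subtraction `σ i - D` exact, so both firings act
as translations and commute. -/
theorem fireAt_comm {D : ℕ} {σ : Config} {i j : ℕ} (hi : D ≤ σ i) (hj : D ≤ σ j) :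
    fireAt D (fireAt D σ i) j = fireAt D (fireAt D σ j) i := by
  funext k
  unfold fireAt
  rcases eq_or_ne k i with rfl | hki <;> rcases eq_or_ne k j with rfl | hkj <;>
    split_ifs <;> omega

theorem diamond_property_general (D : ℕ) (σ σ' σ'' : Config)
    (i j : ℕ) (hij : i ≠ j)
    (h1 : Step D σ i σ') (h2 : Step D σ j σ'') :
    ∃ σ''', Step D σ' j σ''' ∧ Step D σ'' i σ''' := by
  obtain ⟨hi, rfl⟩ := h1
  obtain ⟨hj, rfl⟩ := h2
  exact ⟨_, ⟨hj.trans (le_fireAt_of_ne hij.symm), rfl⟩,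
    hi.trans (le_fireAt_of_ne hij), fireAt_comm hi hj⟩

/-- Diamond property: transitions on two distinct columns commute. -/
theorem diamond_property (D : ℕ) (hD : 2 ≤ D) (σ σ' σ'' : Config)
    (hfin : (Function.support σ).Finite) (i j : ℕ) (hij : i ≠ j)
    (h1 : Step D σ i σ') (h2 : Step D σ j σ'') :
    ∃ σ''', Step D σ' j σ''' ∧ Step D σ'' i σ''' :=
  diamond_property_general D σ σ' σ'' i j hij h1 h2
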